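/- Let a, d, m, n, t, r be positive integers and let G be a graph on n vertices with average degree d = 2e(G)/n. If d^t / n^{t−1} − C(n,r)·(m/n)^t ≥ a, then G contains a vertex subset U with |U| ≥ a such that every r vertices in U have at least m common neighbors. -/

import Mathlib

open Finset

private lemma count_funcs {V : Type*} [Fintype V] [DecidableEq V] (t : ℕ) (s : Finset V) :
    (Finset.univ.filter (fun f : Fin t → V => ∀ i, f i ∈ s)).card = s.card ^ t := by
  have h : Finset.univ.filter (fun f : Fin t → V => ∀ i, f i ∈ s)
      = Fintype.piFinset (fun _ : Fin t => s) := by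
    ext f; simp [Fintype.mem_piFinset]
  rw [h, Fintype.card_piFinset]
  simp

/-- Dependent random choice: if `G` has `n` vertices and average degree `d = 2e(G)/n`,
and `d^t/n^{t−1} − C(n,r)(m/n)^t ≥ a`, then `G` contains a set `U` of at least `a`
vertices such that every `r` vertices of `U` have at least `m` common neighbors. -/
theorem stmt_8 {V : Type*} [Fintype V] [DecidableEq V] (G : SimpleGraph V)
    [DecidableRel G.Adj] (a d m n t r : ℕ)
    (ha : 0 < a) (hd : 0 < d) (hm : 0 < m) (hn0 : 0 < n) (ht : 0 < t) (hr : 0 < r)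
    (hn : Fintype.card V = n)
    (havg : (d : ℝ) = 2 * G.edgeFinset.card / n)
    (hcond : (d : ℝ) ^ t / (n : ℝ) ^ (t - 1) - (n.choose r : ℝ) * ((m : ℝ) / n) ^ t
      ≥ (a : ℝ)) :
    ∃ U : Finset V, a ≤ U.card ∧ ∀ S : Finset V, S ⊆ U → S.card = r →
      m ≤ (Finset.univ.filter (fun v => ∀ u ∈ S, G.Adj u v)).card := by
  have hV : Nonempty V := by
    rw [← Fintype.card_pos_iff, hn]; exact hn0
  have hnR : (0:ℝ) < n := by exact_mod_cast hn0
  let A : (Fin t → V) → Finset V :=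
    fun f => Finset.univ.filter (fun v => ∀ i, G.Adj v (f i))
  let cn : Finset V → Finset V :=
    fun S => Finset.univ.filter (fun v => ∀ u ∈ S, G.Adj u v)
  let Bad : Finset (Finset V) :=
    (Finset.univ.powersetCard r).filter (fun S => (cn S).card < m)
  let B : (Fin t → V) → Finset (Finset V) :=
    fun f => Bad.filter (fun S => S ⊆ A f)
  -- first moment: sum of |A f|
  have key1 : ∑ f : Fin t → V, ((A f).card) = ∑ v : V, (G.degree v) ^ t := by
    show ∑ f : Fin t → V, (Finset.univ.filter (fun v => ∀ i, G.Adj v (f i))).card = _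
    simp_rw [Finset.card_filter]
    rw [Finset.sum_comm]
    refine Finset.sum_congr rfl fun v _ => ?_
    rw [← Finset.card_filter]
    have h := count_funcs t (G.neighborFinset v)
    simp only [SimpleGraph.mem_neighborFinset] at h
    rw [← SimpleGraph.card_neighborFinset_eq_degree, ← h]
  -- second moment: sum of |B f|
  have key2 : ∑ f : Fin t → V, ((B f).card) ≤ n.choose r * m ^ t := by
    show ∑ f : Fin t → V, (Bad.filter (fun S => S ⊆ A f)).card ≤ _
    simp_rw [Finset.card_filter]
    rw [Finset.sum_comm]
    have hcard : ∀ S ∈ Bad, (∑ f : Fin t → V, if S ⊆ A f then 1 else 0) ≤ m ^ t := by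
      intro S hS
      rw [← Finset.card_filter]
      have hsub : ∀ f : Fin t → V, S ⊆ A f ↔ ∀ i, f i ∈ cn S := by
        intro f
        constructor
        · intro h i
          simp only [cn, Finset.mem_filter, Finset.mem_univ, true_and]
          intro u hu
          have h2 := h hu
          simp only [A, Finset.mem_filter, Finset.mem_univ, true_and] at h2
          exact h2 i
        · intro h u hu
          simp only [A, Finset.mem_filter, Finset.mem_univ, true_and]
          intro i
          have h2 := h i
          simp only [cn, Finset.mem_filter, Finset.mem_univ, true_and] at h2
          exact h2 u hu
      have heq : Finset.univ.filter (fun f : Fin t → V => S ⊆ A f)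
          = Finset.univ.filter (fun f : Fin t → V => ∀ i, f i ∈ cn S) := by
        ext f; simp [hsub f]
      rw [heq, count_funcs]
      have hlt : (cn S).card < m := (Finset.mem_filter.mp hS).2
      exact Nat.pow_le_pow_left (Nat.le_of_lt hlt) t
    calc ∑ S ∈ Bad, (∑ f : Fin t → V, if S ⊆ A f then 1 else 0)
        ≤ ∑ _S ∈ Bad, m ^ t := Finset.sum_le_sum hcard
      _ = Bad.card * m ^ t := by rw [Finset.sum_const, smul_eq_mul]
      _ ≤ n.choose r * m ^ t := by
          apply Nat.mul_le_mul_right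
          calc Bad.card ≤ (Finset.univ.powersetCard r (α := V)).card :=
                Finset.card_filter_le _ _
            _ = n.choose r := by rw [Finset.card_powersetCard, Finset.card_univ, hn]
  -- degree sum
  have hdeg : ∑ v : V, ((G.degree v : ℝ)) = d * n := by
    have h := G.sum_degrees_eq_twice_card_edges
    have h2 : (∑ v : V, (G.degree v : ℝ)) = 2 * G.edgeFinset.card := by
      exact_mod_cast h
    rw [h2, havg]; field_simp
  -- convexity (power mean inequality)
  have hpow : (n : ℝ) * (d:ℝ) ^ t ≤ ∑ v : V, ((G.degree v : ℝ)) ^ t := by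
    obtain ⟨t', rfl⟩ : ∃ t', t = t' + 1 := ⟨t - 1, by omega⟩
    have h := pow_sum_div_card_le_sum_pow (f := fun v : V => (G.degree v : ℝ))
      (s := Finset.univ) (fun i _ => by positivity) t'
    rw [hdeg, Finset.card_univ, hn] at h
    calc (n:ℝ) * (d:ℝ) ^ (t'+1) = ((d:ℝ) * n) ^ (t'+1) / (n:ℝ) ^ t' := by
          rw [mul_pow]; field_simp; ring
      _ ≤ _ := h
  have hnt : ((n:ℝ)) ^ (t-1) * n = (n:ℝ) ^ t := by
    rw [← pow_succ]; congr 1; omega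
  have hmain : (a : ℝ) * (n:ℝ)^t ≤ ∑ f : Fin t → V, (((A f).card : ℝ) - ((B f).card : ℝ)) := by
    rw [Finset.sum_sub_distrib]
    have hA' : (n:ℝ) * (d:ℝ)^t ≤ ∑ f : Fin t → V, ((A f).card : ℝ) := by
      have h : (∑ f : Fin t → V, ((A f).card : ℝ)) = ∑ v : V, ((G.degree v : ℝ))^t := by
        exact_mod_cast congrArg (Nat.cast (R := ℝ)) key1
      rw [h]; exact hpow
    have hB' : (∑ f : Fin t → V, ((B f).card : ℝ)) ≤ (n.choose r : ℝ) * (m:ℝ)^t := by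
      calc (∑ f : Fin t → V, ((B f).card : ℝ)) = ((∑ f : Fin t → V, (B f).card : ℕ) : ℝ) := by
            push_cast; ring
        _ ≤ ((n.choose r * m ^ t : ℕ) : ℝ) := by exact_mod_cast key2
        _ = (n.choose r : ℝ) * (m:ℝ)^t := by push_cast; ring
    have hstep : (a : ℝ) * (n:ℝ)^t ≤ (n:ℝ) * (d:ℝ)^t - (n.choose r : ℝ) * (m:ℝ)^t := by
      rw [ge_iff_le] at hcond
      have hmul := mul_le_mul_of_nonneg_right hcond (le_of_lt (pow_pos hnR t))
      calc (a:ℝ) * (n:ℝ)^t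
          ≤ ((d:ℝ)^t / (n:ℝ)^(t-1) - (n.choose r : ℝ) * ((m:ℝ)/n)^t) * (n:ℝ)^t := hmul
        _ = (n:ℝ) * (d:ℝ)^t - (n.choose r : ℝ) * (m:ℝ)^t := by
            have hne : (n:ℝ) ≠ 0 := hnR.ne'
            have hne2 : (n:ℝ)^(t-1) ≠ 0 := pow_ne_zero _ hne
            rw [sub_mul, div_pow, ← hnt]
            field_simp
    linarith
  have hex : ∃ f : Fin t → V, (a : ℝ) ≤ ((A f).card : ℝ) - ((B f).card : ℝ) := by
    by_contra hcon
    push_neg at hcon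
    have hsum : ∑ f : Fin t → V, (((A f).card : ℝ) - ((B f).card : ℝ))
        < ∑ _f : Fin t → V, (a : ℝ) := by
      apply Finset.sum_lt_sum_of_nonempty
      · exact Finset.univ_nonempty
      · intro f _; exact hcon f
    rw [Finset.sum_const, Finset.card_univ, Fintype.card_fun, Fintype.card_fin, hn,
      nsmul_eq_mul] at hsum
    push_cast at hsum
    nlinarith [hmain]
  obtain ⟨f, hf⟩ := hex
  have hfN : a + (B f).card ≤ (A f).card := by
    have h : ((a + (B f).card : ℕ) : ℝ) ≤ ((A f).card : ℝ) := by push_cast; linarith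
    exact_mod_cast h
  -- construct U by deleting one vertex from each bad subset of A f
  let rep : Finset V → V := fun S => if h : S.Nonempty then h.choose else hV.some
  refine ⟨A f \ (B f).image rep, ?_, ?_⟩
  · have h1 := Finset.le_card_sdiff ((B f).image rep) (A f)
    have h2 : ((B f).image rep).card ≤ (B f).card := Finset.card_image_le
    omega
  · intro S hS hScard
    by_contra hlt
    push_neg at hlt
    have hSA : S ⊆ A f := hS.trans (Finset.sdiff_subset)
    have hSB : S ∈ B f := by
      refine Finset.mem_filter.mpr ⟨?_, hSA⟩
      refine Finset.mem_filter.mpr ⟨?_, ?_⟩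
      · rw [Finset.mem_powersetCard]; exact ⟨Finset.subset_univ S, hScard⟩
      · exact hlt
    have hne : S.Nonempty := Finset.card_pos.mp (by omega)
    have hrepS : rep S ∈ S := by
      show (if h : S.Nonempty then h.choose else hV.some) ∈ S
      rw [dif_pos hne]; exact hne.choose_spec
    have hinU : rep S ∈ A f \ (B f).image rep := hS hrepS
    have hinImg : rep S ∈ (B f).image rep := Finset.mem_image_of_mem rep hSB
    exact (Finset.mem_sdiff.mp hinU).2 hinImg
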